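/- Let F be a local field with uniformizer ϖ and residue field of cardinality q, and consider G = GL₂(F), K = GL₂(O_F). Let T_ϖ and S_ϖ be the Hecke operators given by the double cosets of diag(1,ϖ) and diag(ϖ,ϖ), acting on functions on Mat₂ₓ₂(F) by the rule (h·f)(M) = f(h⁻¹M) extended to Hecke operators via transposes of double coset sums. Let φ be the characteristic function of Mat₂ₓ₂(O_F). Then q·φ − T_ϖ^t·φ + S_ϖ^t·φ is the characteristic function of diag(ϖ,ϖ)⁻¹·GL₂(O_F), i.e. of the set of matrices with entries in ϖ⁻¹O_F and determinant in ϖ⁻²O_F^×. -/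
import Mathlib


noncomputable section GL2HeckeSetup

variable {F : Type*} [Field F] (v : Valuation F (WithZero (Multiplicative ℤ)))

/-- The characteristic function of `Mat₂ₓ₂(O_F)`. -/
def intIndicator : Matrix (Fin 2) (Fin 2) F → ℤ :=
  Set.indicator {M | ∀ i j, v (M i j) ≤ 1} fun _ => (1 : ℤ)

variable (ϖ : F) (Rep : Finset F)

/-- The transpose Hecke operator `T_ϖ^t` applied to a `GL₂(O_F)`-invariant function `f`:
the sum `Σ_γ f(γ⁻¹M)` over the `q+1` left coset representatives `γ` of
`K·diag(1,ϖ)⁻¹·K`, where `γ⁻¹` runs through `diag(ϖ,1)` and `[[1,κ],[0,ϖ]]`, `κ ∈ [κ]`. -/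
def THeckeT (f : Matrix (Fin 2) (Fin 2) F → ℤ) (M : Matrix (Fin 2) (Fin 2) F) : ℤ :=
  f (!![ϖ, 0; 0, 1] * M) + ∑ κ ∈ Rep, f (!![1, κ; 0, ϖ] * M)

/-- The transpose Hecke operator `S_ϖ^t` applied to `f`: `f(γ⁻¹M)` for the single coset
representative `γ = diag(ϖ,ϖ)⁻¹` of `K·diag(ϖ,ϖ)⁻¹·K`. -/
def SHeckeT (f : Matrix (Fin 2) (Fin 2) F → ℤ) (M : Matrix (Fin 2) (Fin 2) F) : ℤ :=
  f (!![ϖ, 0; 0, ϖ] * M)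

end GL2HeckeSetup

section ZZHelpers
open Multiplicative

/-- Abbreviation for integer powers in `WithZero (Multiplicative ℤ)`. -/
def zz (n : ℤ) : WithZero (Multiplicative ℤ) :=
  ((ofAdd n : Multiplicative ℤ) : WithZero (Multiplicative ℤ))

lemma zz_mul (a b : ℤ) : zz a * zz b = zz (a + b) := rfl

lemma zz_le {a b : ℤ} : zz a ≤ zz b ↔ a ≤ b := by
  rw [zz, zz, WithZero.coe_le_coe, Multiplicative.ofAdd_le]

lemma zz_lt {a b : ℤ} : zz a < zz b ↔ a < b := by
  rw [zz, zz, WithZero.coe_lt_coe, Multiplicative.ofAdd_lt]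

lemma zz_zero : zz 0 = 1 := rfl

lemma zz_ne_zero (n : ℤ) : zz n ≠ 0 := WithZero.coe_ne_zero

lemma eq_zz_one {a : WithZero (Multiplicative ℤ)} (h1 : a ≤ zz 1) (h2 : ¬ a ≤ 1) :
    a = zz 1 := by
  rcases eq_or_ne a 0 with rfl | ha
  · exact absurd zero_le_one h2
  obtain ⟨b, rfl⟩ := WithZero.ne_zero_iff_exists.mp ha
  have h1' : b ≤ ofAdd (1 : ℤ) := WithZero.coe_le_coe.mp h1
  have h2' : ¬ b ≤ ofAdd (0 : ℤ) := fun h => h2 (WithZero.coe_le_coe.mpr h)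
  have e1 : b.toAdd ≤ 1 := Multiplicative.toAdd_le.mpr h1'
  have e2 : ¬ b.toAdd ≤ 0 := fun h => h2' (Multiplicative.toAdd_le.mp h)
  have : b.toAdd = 1 := by omega
  rw [zz, ← this, ofAdd_toAdd]

lemma zz_one_mul_neg_one : zz 1 * zz (-1) = 1 := by
  rw [zz_mul, show (1 : ℤ) + (-1) = 0 by norm_num, zz_zero]

lemma zz_neg_one_mul_one : zz (-1) * zz 1 = 1 := by
  rw [zz_mul, show (-1 : ℤ) + 1 = 0 by norm_num, zz_zero]

lemma zz_one_mul_one : zz 1 * zz 1 = zz 2 := by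
  rw [zz_mul]; norm_num

lemma le01 : (1 : WithZero (Multiplicative ℤ)) ≤ zz 1 := by
  rw [← zz_zero]; exact zz_le.mpr (by norm_num)

lemma lt01 : (1 : WithZero (Multiplicative ℤ)) < zz 1 := by
  rw [← zz_zero]; exact zz_lt.mpr (by norm_num)

lemma lt_zz12 : zz 1 < zz 2 := zz_lt.mpr (by norm_num)

lemma lt02 : (1 : WithZero (Multiplicative ℤ)) < zz 2 := by
  rw [← zz_zero]; exact zz_lt.mpr (by norm_num)

lemma mul_zz_one_le_one {g : WithZero (Multiplicative ℤ)} :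
    g * zz 1 ≤ 1 ↔ g ≤ zz (-1) := by
  constructor
  · intro h
    have := mul_le_mul_left h (zz (-1))
    rwa [mul_assoc, zz_one_mul_neg_one, mul_one, one_mul] at this
  · intro h
    have := mul_le_mul_left h (zz 1)
    rwa [zz_neg_one_mul_one] at this

end ZZHelpers

/-- For `G = GL₂(F)` acting on `Mat₂ₓ₂(F)` by `(M, h) ↦ h⁻¹M`, with `φ` the characteristic
function of `Mat₂ₓ₂(O_F)`: `q·φ − T_ϖ^t·φ + S_ϖ^t·φ` is the characteristic function of
`diag(ϖ,ϖ)⁻¹·GL₂(O_F)`, i.e. of the matrices with entries in `ϖ⁻¹O_F` and determinant in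
`ϖ⁻²O_F^×`. Here `Rep ⊆ O_F` is a set of representatives of the residue field, of
cardinality `q`. -/
theorem gl2_hecke_identity_on_matrices
    {F : Type*} [Field F] (v : Valuation F (WithZero (Multiplicative ℤ)))
    (ϖ : F)
    (hϖ : v ϖ = ((Multiplicative.ofAdd (-1 : ℤ) : Multiplicative ℤ) :
      WithZero (Multiplicative ℤ)))
    (Rep : Finset F)
    (hRepInt : ∀ r ∈ Rep, v r ≤ 1)
    (hRep : ∀ x : F, v x ≤ 1 → ∃! r, r ∈ Rep ∧
      v (x - r) ≤ ((Multiplicative.ofAdd (-1 : ℤ) : Multiplicative ℤ) :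
        WithZero (Multiplicative ℤ))) :
    ∀ M : Matrix (Fin 2) (Fin 2) F,
      (Rep.card : ℤ) * intIndicator v M - THeckeT ϖ Rep (intIndicator v) M +
          SHeckeT ϖ (intIndicator v) M =
        Set.indicator
          {N : Matrix (Fin 2) (Fin 2) F |
            (∀ i j, v (N i j) ≤ ((Multiplicative.ofAdd (1 : ℤ) : Multiplicative ℤ) :
              WithZero (Multiplicative ℤ))) ∧
            v N.det = ((Multiplicative.ofAdd (2 : ℤ) : Multiplicative ℤ) :
              WithZero (Multiplicative ℤ))}
          (fun _ => (1 : ℤ)) M := by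
    classical
  intro M
  have hϖ' : v ϖ = zz (-1) := hϖ
  have hRep' : ∀ x : F, v x ≤ 1 → ∃! r, r ∈ Rep ∧ v (x - r) ≤ zz (-1) := hRep
  simp only [THeckeT, SHeckeT]
  rw [show ((Multiplicative.ofAdd (1 : ℤ) : Multiplicative ℤ) :
        WithZero (Multiplicative ℤ)) = zz 1 from rfl,
    show ((Multiplicative.ofAdd (2 : ℤ) : Multiplicative ℤ) :
        WithZero (Multiplicative ℤ)) = zz 2 from rfl]
  set S2 : Set (Matrix (Fin 2) (Fin 2) F) :=
    {N | (∀ i j, v (N i j) ≤ zz 1) ∧ v N.det = zz 2} with hS2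
  have φ1 : ∀ N : Matrix (Fin 2) (Fin 2) F, (∀ i j, v (N i j) ≤ 1) → intIndicator v N = 1 := by
    intro N h
    have h' : N ∈ {M : Matrix (Fin 2) (Fin 2) F | ∀ i j, v (M i j) ≤ 1} := h
    unfold intIndicator
    exact Set.indicator_of_mem h' _
  have φ0 : ∀ N : Matrix (Fin 2) (Fin 2) F, ¬ (∀ i j, v (N i j) ≤ 1) → intIndicator v N = 0 := by
    intro N h
    have h' : N ∉ {M : Matrix (Fin 2) (Fin 2) F | ∀ i j, v (M i j) ≤ 1} := h
    unfold intIndicator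
    exact Set.indicator_of_notMem h' _
  have EB0 : ∀ j, (!![ϖ, 0; 0, 1] * M) 0 j = ϖ * M 0 j := by
    intro j; simp [Matrix.mul_apply, Fin.sum_univ_two]
  have EB1 : ∀ j, (!![ϖ, 0; 0, 1] * M) 1 j = M 1 j := by
    intro j; simp [Matrix.mul_apply, Fin.sum_univ_two]
  have EC0 : ∀ (κ : F) (j : Fin 2), (!![1, κ; 0, ϖ] * M) 0 j = M 0 j + κ * M 1 j := by
    intro κ j; simp [Matrix.mul_apply, Fin.sum_univ_two]
  have EC1 : ∀ (κ : F) (j : Fin 2), (!![1, κ; 0, ϖ] * M) 1 j = ϖ * M 1 j := by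
    intro κ j; simp [Matrix.mul_apply, Fin.sum_univ_two]
  have ED0 : ∀ j, (!![ϖ, 0; 0, ϖ] * M) 0 j = ϖ * M 0 j := by
    intro j; simp [Matrix.mul_apply, Fin.sum_univ_two]
  have ED1 : ∀ j, (!![ϖ, 0; 0, ϖ] * M) 1 j = ϖ * M 1 j := by
    intro j; simp [Matrix.mul_apply, Fin.sum_univ_two]
  have vmul1 : ∀ x : F, v (ϖ * x) ≤ 1 ↔ v x ≤ zz 1 := by
    intro x
    rw [v.map_mul, hϖ']
    constructor
    · intro h
      have := mul_le_mul_right h (zz 1)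
      rwa [← mul_assoc, zz_one_mul_neg_one, one_mul, mul_one] at this
    · intro h
      have := mul_le_mul_right h (zz (-1))
      rwa [zz_neg_one_mul_one] at this
  have condA : (∀ i j, v (M i j) ≤ 1) ↔
      ((v (M 0 0) ≤ 1 ∧ v (M 0 1) ≤ 1) ∧ (v (M 1 0) ≤ 1 ∧ v (M 1 1) ≤ 1)) := by
    simp only [Fin.forall_fin_two]
  have condB : (∀ i j, v ((!![ϖ, 0; 0, 1] * M) i j) ≤ 1) ↔
      ((v (M 0 0) ≤ zz 1 ∧ v (M 0 1) ≤ zz 1) ∧ (v (M 1 0) ≤ 1 ∧ v (M 1 1) ≤ 1)) := by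
    simp only [Fin.forall_fin_two, EB0, EB1, vmul1]
  have condC : ∀ κ : F, (∀ i j, v ((!![1, κ; 0, ϖ] * M) i j) ≤ 1) ↔
      ((v (M 0 0 + κ * M 1 0) ≤ 1 ∧ v (M 0 1 + κ * M 1 1) ≤ 1) ∧
        (v (M 1 0) ≤ zz 1 ∧ v (M 1 1) ≤ zz 1)) := by
    intro κ
    simp only [Fin.forall_fin_two, EC0, EC1, vmul1]
  have condD : (∀ i j, v ((!![ϖ, 0; 0, ϖ] * M) i j) ≤ 1) ↔
      ((v (M 0 0) ≤ zz 1 ∧ v (M 0 1) ≤ zz 1) ∧ (v (M 1 0) ≤ zz 1 ∧ v (M 1 1) ≤ zz 1)) := by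
    simp only [Fin.forall_fin_two, ED0, ED1, vmul1]
  have condR : M ∈ S2 ↔
      (((v (M 0 0) ≤ zz 1 ∧ v (M 0 1) ≤ zz 1) ∧ (v (M 1 0) ≤ zz 1 ∧ v (M 1 1) ≤ zz 1)) ∧
        v M.det = zz 2) := by
    rw [hS2]
    simp only [Set.mem_setOf_eq, Fin.forall_fin_two]
  have detv : v M.det ≤ max (v (M 0 0) * v (M 1 1)) (v (M 0 1) * v (M 1 0)) := by
    rw [Matrix.det_fin_two]
    exact (v.map_sub _ _).trans_eq (by rw [v.map_mul, v.map_mul])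
  by_cases hall : (v (M 0 0) ≤ zz 1 ∧ v (M 0 1) ≤ zz 1) ∧ (v (M 1 0) ≤ zz 1 ∧ v (M 1 1) ≤ zz 1)
  · -- all entries in ϖ⁻¹O
    have hD1 : intIndicator v (!![ϖ, 0; 0, ϖ] * M) = 1 := φ1 _ (condD.mpr hall)
    by_cases hint : (v (M 0 0) ≤ 1 ∧ v (M 0 1) ≤ 1) ∧ (v (M 1 0) ≤ 1 ∧ v (M 1 1) ≤ 1)
    · -- M integral
      have hA1 : intIndicator v M = 1 := φ1 _ (condA.mpr hint)
      have hB1 : intIndicator v (!![ϖ, 0; 0, 1] * M) = 1 :=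
        φ1 _ (condB.mpr ⟨⟨hint.1.1.trans le01, hint.1.2.trans le01⟩, hint.2⟩)
      have hC1 : ∀ κ ∈ Rep, intIndicator v (!![1, κ; 0, ϖ] * M) = 1 := by
        intro κ hκ
        refine φ1 _ ((condC κ).mpr ⟨⟨?_, ?_⟩, hint.2.1.trans le01, hint.2.2.trans le01⟩)
        · exact (v.map_add _ _).trans (max_le hint.1.1 (by
            rw [v.map_mul]; exact mul_le_one' (hRepInt κ hκ) hint.2.1))
        · exact (v.map_add _ _).trans (max_le hint.1.2 (by
            rw [v.map_mul]; exact mul_le_one' (hRepInt κ hκ) hint.2.2))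
      have hR0 : Set.indicator S2 (fun _ => (1 : ℤ)) M = 0 := by
        refine Set.indicator_of_notMem (fun h => ?_) _
        have hd2 := (condR.mp h).2
        have hle : v M.det ≤ 1 := detv.trans
          (max_le (mul_le_one' hint.1.1 hint.2.2) (mul_le_one' hint.1.2 hint.2.1))
        rw [hd2] at hle
        exact absurd hle (not_le.mpr lt02)
      rw [hA1, hB1, hD1, hR0, Finset.sum_congr rfl hC1, Finset.sum_const, nsmul_eq_mul, mul_one]
      ring
    · -- M not integral
      by_cases hc : v (M 1 0) ≤ 1
      · by_cases hd : v (M 1 1) ≤ 1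
        · -- bottom row integral, some top entry of valuation exactly ϖ⁻¹
          have hrow0 : ¬ v (M 0 0) ≤ 1 ∨ ¬ v (M 0 1) ≤ 1 := by
            by_contra hcon
            push_neg at hcon
            exact hint ⟨⟨hcon.1, hcon.2⟩, hc, hd⟩
          have hA0 : intIndicator v M = 0 := φ0 _ (fun h => hint (condA.mp h))
          have hB1 : intIndicator v (!![ϖ, 0; 0, 1] * M) = 1 :=
            φ1 _ (condB.mpr ⟨⟨hall.1.1, hall.1.2⟩, hc, hd⟩)
          have hC0 : ∀ κ ∈ Rep, intIndicator v (!![1, κ; 0, ϖ] * M) = 0 := by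
            intro κ hκ
            refine φ0 _ (fun h => ?_)
            rw [condC κ] at h
            rcases hrow0 with h0 | h0
            · have hv : v (M 0 0) = zz 1 := eq_zz_one hall.1.1 h0
              have hlt : v (κ * M 1 0) < v (M 0 0) := by
                rw [v.map_mul, hv]
                exact lt_of_le_of_lt (mul_le_one' (hRepInt κ hκ) hc) lt01
              have heq := Valuation.map_add_eq_of_lt_left v hlt
              exact h0 (by rw [← heq]; exact h.1.1)
            · have hv : v (M 0 1) = zz 1 := eq_zz_one hall.1.2 h0
              have hlt : v (κ * M 1 1) < v (M 0 1) := by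
                rw [v.map_mul, hv]
                exact lt_of_le_of_lt (mul_le_one' (hRepInt κ hκ) hd) lt01
              have heq := Valuation.map_add_eq_of_lt_left v hlt
              exact h0 (by rw [← heq]; exact h.1.2)
          have hR0 : Set.indicator S2 (fun _ => (1 : ℤ)) M = 0 := by
            refine Set.indicator_of_notMem (fun h => ?_) _
            have hd2 := (condR.mp h).2
            have hle : v M.det ≤ zz 1 := detv.trans (max_le
              (by calc v (M 0 0) * v (M 1 1) ≤ zz 1 * 1 := mul_le_mul' hall.1.1 hd
                    _ = zz 1 := mul_one _)
              (by calc v (M 0 1) * v (M 1 0) ≤ zz 1 * 1 := mul_le_mul' hall.1.2 hc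
                    _ = zz 1 := mul_one _))
            rw [hd2] at hle
            exact absurd hle (not_le.mpr lt_zz12)
          rw [hA0, hB1, hD1, hR0, Finset.sum_eq_zero hC0]
          ring
        · -- v(M 1 1) = ϖ⁻¹ exactly, v(M 1 0) integral
          have hd' : v (M 1 1) = zz 1 := eq_zz_one hall.2.2 hd
          have hA0 : intIndicator v M = 0 := φ0 _ (fun h => hd (condA.mp h).2.2)
          have hB0 : intIndicator v (!![ϖ, 0; 0, 1] * M) = 0 :=
            φ0 _ (fun h => hd (condB.mp h).2.2)
          have h11 : M 1 1 ≠ 0 := by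
            intro h0
            rw [h0, v.map_zero] at hd'
            exact zz_ne_zero 1 hd'.symm
          set x := M 0 1 / M 1 1 with hxdef
          have hx : x * M 1 1 = M 0 1 := div_mul_cancel₀ _ h11
          have hvx : v x ≤ 1 := by
            have h1 : v x * zz 1 = v (M 0 1) := by rw [← hd', ← v.map_mul, hx]
            have h2 : v x * zz 1 ≤ 1 * zz 1 := by rw [h1, one_mul]; exact hall.1.2
            have h3 := mul_le_mul_left h2 (zz (-1))
            rwa [mul_assoc, mul_assoc, zz_one_mul_neg_one, mul_one, mul_one] at h3
          obtain ⟨r₀, ⟨hr₀R, hr₀v⟩, hr₀u⟩ := hRep' (-x) (by rw [v.map_neg]; exact hvx)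
          have key : ∀ κ ∈ Rep, (v (M 0 1 + κ * M 1 1) ≤ 1 ↔ κ = r₀) := by
            intro κ hκ
            have e : M 0 1 + κ * M 1 1 = (x + κ) * M 1 1 := by rw [add_mul, hx]
            rw [e, v.map_mul, hd', mul_zz_one_le_one]
            have e2 : v (x + κ) = v (-x - κ) := by
              rw [← v.map_neg]; ring_nf
            rw [e2]
            constructor
            · intro h; exact hr₀u κ ⟨hκ, h⟩
            · rintro rfl; exact hr₀v
          by_cases ha : v (M 0 0) ≤ 1
          · -- exactly one κ contributes; determinant not of valuation ϖ⁻²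
            have hC : ∀ κ ∈ Rep,
                intIndicator v (!![1, κ; 0, ϖ] * M) = if κ = r₀ then 1 else 0 := by
              intro κ hκ
              by_cases hk : κ = r₀
              · subst hk
                rw [if_pos rfl]
                refine φ1 _ ((condC κ).mpr ⟨⟨?_, (key κ hκ).mpr rfl⟩, hall.2⟩)
                exact (v.map_add _ _).trans (max_le ha (by
                  rw [v.map_mul]; exact mul_le_one' (hRepInt κ hκ) hc))
              · rw [if_neg hk]
                refine φ0 _ (fun h => hk ?_)
                rw [condC κ] at h
                exact (key κ hκ).mp h.1.2
            have hR0 : Set.indicator S2 (fun _ => (1 : ℤ)) M = 0 := by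
              refine Set.indicator_of_notMem (fun h => ?_) _
              have hd2 := (condR.mp h).2
              have hle : v M.det ≤ zz 1 := detv.trans (max_le
                (by calc v (M 0 0) * v (M 1 1) ≤ 1 * zz 1 := mul_le_mul' ha hall.2.2
                      _ = zz 1 := one_mul _)
                (by calc v (M 0 1) * v (M 1 0) ≤ zz 1 * 1 := mul_le_mul' hall.1.2 hc
                      _ = zz 1 := mul_one _))
              rw [hd2] at hle
              exact absurd hle (not_le.mpr lt_zz12)
            rw [hA0, hB0, hD1, hR0, Finset.sum_congr rfl hC,
              Finset.sum_ite_eq' Rep r₀ (fun _ => (1 : ℤ)), if_pos hr₀R]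
            ring
          · -- v(M 0 0) = ϖ⁻¹: no κ contributes, determinant has valuation ϖ⁻²
            have ha' : v (M 0 0) = zz 1 := eq_zz_one hall.1.1 ha
            have hC0 : ∀ κ ∈ Rep, intIndicator v (!![1, κ; 0, ϖ] * M) = 0 := by
              intro κ hκ
              refine φ0 _ (fun h => ?_)
              rw [condC κ] at h
              have hlt : v (κ * M 1 0) < v (M 0 0) := by
                rw [v.map_mul, ha']
                exact lt_of_le_of_lt (mul_le_one' (hRepInt κ hκ) hc) lt01
              have heq := Valuation.map_add_eq_of_lt_left v hlt
              exact ha (by rw [← heq]; exact h.1.1)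
            have hR1 : Set.indicator S2 (fun _ => (1 : ℤ)) M = 1 := by
              refine Set.indicator_of_mem (condR.mpr ⟨hall, ?_⟩) _
              rw [Matrix.det_fin_two]
              have hlt : v (M 0 1 * M 1 0) < v (M 0 0 * M 1 1) := by
                rw [v.map_mul, v.map_mul, ha', hd', zz_one_mul_one]
                calc v (M 0 1) * v (M 1 0) ≤ zz 1 * 1 := mul_le_mul' hall.1.2 hc
                  _ = zz 1 := mul_one _
                  _ < zz 2 := lt_zz12
              rw [Valuation.map_sub_eq_of_lt_left v hlt, v.map_mul, ha', hd', zz_one_mul_one]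
            rw [hA0, hB0, hD1, hR1, Finset.sum_eq_zero hC0]
            ring
      · -- v(M 1 0) = ϖ⁻¹ exactly
        have hc' : v (M 1 0) = zz 1 := eq_zz_one hall.2.1 hc
        have hA0 : intIndicator v M = 0 := φ0 _ (fun h => hc (condA.mp h).2.1)
        have hB0 : intIndicator v (!![ϖ, 0; 0, 1] * M) = 0 :=
          φ0 _ (fun h => hc (condB.mp h).2.1)
        have h10 : M 1 0 ≠ 0 := by
          intro h0
          rw [h0, v.map_zero] at hc'
          exact zz_ne_zero 1 hc'.symm
        set x := M 0 0 / M 1 0 with hxdef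
        have hx : x * M 1 0 = M 0 0 := div_mul_cancel₀ _ h10
        have hvx : v x ≤ 1 := by
          have h1 : v x * zz 1 = v (M 0 0) := by rw [← hc', ← v.map_mul, hx]
          have h2 : v x * zz 1 ≤ 1 * zz 1 := by rw [h1, one_mul]; exact hall.1.1
          have h3 := mul_le_mul_left h2 (zz (-1))
          rwa [mul_assoc, mul_assoc, zz_one_mul_neg_one, mul_one, mul_one] at h3
        obtain ⟨r₀, ⟨hr₀R, hr₀v⟩, hr₀u⟩ := hRep' (-x) (by rw [v.map_neg]; exact hvx)
        have key : ∀ κ ∈ Rep, (v (M 0 0 + κ * M 1 0) ≤ 1 ↔ κ = r₀) := by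
          intro κ hκ
          have e : M 0 0 + κ * M 1 0 = (x + κ) * M 1 0 := by rw [add_mul, hx]
          rw [e, v.map_mul, hc', mul_zz_one_le_one]
          have e2 : v (x + κ) = v (-x - κ) := by
            rw [← v.map_neg]; ring_nf
          rw [e2]
          constructor
          · intro h; exact hr₀u κ ⟨hκ, h⟩
          · rintro rfl; exact hr₀v
        have hdet : M.det = (x * M 1 1 - M 0 1) * M 1 0 := by
          rw [Matrix.det_fin_two, ← hx]; ring
        have tbound : v ((r₀ + x) * M 1 1) ≤ 1 := by
          rw [v.map_mul]
          have hr : v (r₀ + x) ≤ zz (-1) := by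
            have e : r₀ + x = -(-x - r₀) := by ring
            rw [e, v.map_neg]
            exact hr₀v
          calc v (r₀ + x) * v (M 1 1) ≤ zz (-1) * zz 1 := mul_le_mul' hr hall.2.2
            _ = 1 := zz_neg_one_mul_one
        have hEiff : v (M 0 1 + r₀ * M 1 1) ≤ 1 ↔ v (x * M 1 1 - M 0 1) ≤ 1 := by
          constructor
          · intro h
            have e : x * M 1 1 - M 0 1 = -(M 0 1 + r₀ * M 1 1) + (r₀ + x) * M 1 1 := by ring
            rw [e]
            exact (v.map_add _ _).trans (max_le (by rw [v.map_neg]; exact h) tbound)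
          · intro h
            have e : M 0 1 + r₀ * M 1 1 = -(x * M 1 1 - M 0 1) + (r₀ + x) * M 1 1 := by ring
            rw [e]
            exact (v.map_add _ _).trans (max_le (by rw [v.map_neg]; exact h) tbound)
        by_cases hE : v (M 0 1 + r₀ * M 1 1) ≤ 1
        · -- exactly one κ contributes, determinant not of valuation ϖ⁻²
          have hC : ∀ κ ∈ Rep,
              intIndicator v (!![1, κ; 0, ϖ] * M) = if κ = r₀ then 1 else 0 := by
            intro κ hκ
            by_cases hk : κ = r₀
            · subst hk
              rw [if_pos rfl]
              exact φ1 _ ((condC κ).mpr ⟨⟨(key κ hκ).mpr rfl, hE⟩, hall.2⟩)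
            · rw [if_neg hk]
              refine φ0 _ (fun h => hk ?_)
              rw [condC κ] at h
              exact (key κ hκ).mp h.1.1
          have hR0 : Set.indicator S2 (fun _ => (1 : ℤ)) M = 0 := by
            refine Set.indicator_of_notMem (fun h => ?_) _
            have hd2 := (condR.mp h).2
            have hle : v M.det ≤ zz 1 := by
              rw [hdet, v.map_mul, hc']
              calc v (x * M 1 1 - M 0 1) * zz 1 ≤ 1 * zz 1 :=
                    mul_le_mul_left (hEiff.mp hE) _
                _ = zz 1 := one_mul _
            rw [hd2] at hle
            exact absurd hle (not_le.mpr lt_zz12)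
          rw [hA0, hB0, hD1, hR0, Finset.sum_congr rfl hC,
            Finset.sum_ite_eq' Rep r₀ (fun _ => (1 : ℤ)), if_pos hr₀R]
          ring
        · -- no κ contributes, determinant of valuation ϖ⁻²
          have hC0 : ∀ κ ∈ Rep, intIndicator v (!![1, κ; 0, ϖ] * M) = 0 := by
            intro κ hκ
            refine φ0 _ (fun h => ?_)
            rw [condC κ] at h
            by_cases hk : κ = r₀
            · subst hk
              exact hE h.1.2
            · exact hk ((key κ hκ).mp h.1.1)
          have hfv : v (x * M 1 1 - M 0 1) = zz 1 := by
            refine eq_zz_one ?_ (fun h => hE (hEiff.mpr h))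
            refine (v.map_sub _ _).trans (max_le ?_ hall.1.2)
            rw [v.map_mul]
            calc v x * v (M 1 1) ≤ 1 * zz 1 := mul_le_mul' hvx hall.2.2
              _ = zz 1 := one_mul _
          have hR1 : Set.indicator S2 (fun _ => (1 : ℤ)) M = 1 := by
            refine Set.indicator_of_mem (condR.mpr ⟨hall, ?_⟩) _
            rw [hdet, v.map_mul, hc', hfv, zz_one_mul_one]
          rw [hA0, hB0, hD1, hR1, Finset.sum_eq_zero hC0]
          ring
  · -- some entry not in ϖ⁻¹O : everything vanishes
    have hA0 : intIndicator v M = 0 := by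
      refine φ0 _ (fun h => hall ?_)
      rw [condA] at h
      exact ⟨⟨h.1.1.trans le01, h.1.2.trans le01⟩, h.2.1.trans le01, h.2.2.trans le01⟩
    have hB0 : intIndicator v (!![ϖ, 0; 0, 1] * M) = 0 := by
      refine φ0 _ (fun h => hall ?_)
      rw [condB] at h
      exact ⟨h.1, h.2.1.trans le01, h.2.2.trans le01⟩
    have hC0 : ∀ κ ∈ Rep, intIndicator v (!![1, κ; 0, ϖ] * M) = 0 := by
      intro κ hκ
      refine φ0 _ (fun h => hall ?_)
      rw [condC κ] at h
      have hκ1 : v κ ≤ 1 := hRepInt κ hκ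
      have h00 : v (M 0 0) ≤ zz 1 := by
        have e : M 0 0 = (M 0 0 + κ * M 1 0) - κ * M 1 0 := by ring
        rw [e]
        refine (v.map_sub _ _).trans (max_le (h.1.1.trans le01) ?_)
        rw [v.map_mul]
        calc v κ * v (M 1 0) ≤ 1 * zz 1 := mul_le_mul' hκ1 h.2.1
          _ = zz 1 := one_mul _
      have h01 : v (M 0 1) ≤ zz 1 := by
        have e : M 0 1 = (M 0 1 + κ * M 1 1) - κ * M 1 1 := by ring
        rw [e]
        refine (v.map_sub _ _).trans (max_le (h.1.2.trans le01) ?_)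
        rw [v.map_mul]
        calc v κ * v (M 1 1) ≤ 1 * zz 1 := mul_le_mul' hκ1 h.2.2
          _ = zz 1 := one_mul _
      exact ⟨⟨h00, h01⟩, h.2⟩
    have hD0 : intIndicator v (!![ϖ, 0; 0, ϖ] * M) = 0 := φ0 _ (fun h => hall (condD.mp h))
    have hR0 : Set.indicator S2 (fun _ => (1 : ℤ)) M = 0 :=
      Set.indicator_of_notMem (fun h => hall (condR.mp h).1) _
    rw [hA0, hB0, hD0, hR0, Finset.sum_eq_zero hC0]
    ring
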